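/- arXiv:2207.02557 — 3 statements merged into one kernel-verified Lean document; each statement's English description precedes it below -/
import Mathlib

section
/- Let X be a proper geodesic ε-locally uniquely geodesic metric space. Then the map sending a pair of points (a,b) with d(a,b) < ε to the unique shortest path from a to b (parametrized proportionally to arc length on [0,1]) is continuous with respect to the uniform metric on paths. -/
open Set Filter Metric
open scoped ENNReal

/-- A constant-speed shortest path on `[0,1]` from `x` to `y`
(a shortest path parametrized proportionally to arc length). -/
def IsGeodSeg {X : Type*} [MetricSpace X] (γ : ℝ → X) (x y : X) : Prop :=
  γ 0 = x ∧ γ 1 = y ∧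
    ∀ s ∈ Icc (0:ℝ) 1, ∀ t ∈ Icc (0:ℝ) 1, dist (γ s) (γ t) = |s - t| * dist x y

/-- `γ` restricted to `[a,b]` is a constant-speed shortest path between its endpoints. -/
def IsGeodSegOn {X : Type*} [MetricSpace X] (γ : ℝ → X) (a b : ℝ) : Prop :=
  ∀ s ∈ Icc a b, ∀ t ∈ Icc a b,
    (b - a) * dist (γ s) (γ t) = |s - t| * dist (γ a) (γ b)

/-- A geodesic metric space: any two points are joined by a shortest path. -/
def GeodesicSpace (X : Type*) [MetricSpace X] : Prop :=
  ∀ x y : X, ∃ γ : ℝ → X, IsGeodSeg γ x y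

/-- `X` is `ε`-locally uniquely geodesic: any two points at distance `≤ ε` are joined
by a unique shortest path (parametrized proportionally to arc length on `[0,1]`). -/
def LocUniqGeo (X : Type*) [MetricSpace X] (ε : ℝ) : Prop :=
  ∀ x y : X, dist x y ≤ ε → ∃ γ : ℝ → X, IsGeodSeg γ x y ∧
    ∀ γ' : ℝ → X, IsGeodSeg γ' x y → EqOn γ' γ (Icc (0:ℝ) 1)

/-- A closed curve (loop), modelled as a continuous `1`-periodic map `ℝ → X`. -/
def IsLoop {X : Type*} [TopologicalSpace X] (γ : ℝ → X) : Prop :=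
  Continuous γ ∧ ∀ t, γ (t + 1) = γ t

/-- The loop `γ` is null-homotopic (contractible) as a map `S¹ → X`. -/
def NullHomotopicLoop {X : Type*} [TopologicalSpace X] (γ : ℝ → X) : Prop :=
  ∃ H : ℝ × ℝ → X, Continuous H ∧ (∀ t, H (t, 0) = γ t) ∧
    (∃ c, ∀ t, H (t, 1) = c) ∧ (∀ t s, H (t + 1, s) = H (t, s))

/-- Length of the closed curve `γ` (total variation over one period). -/
noncomputable def loopLength {X : Type*} [MetricSpace X] (γ : ℝ → X) : ℝ≥0∞ :=
  eVariationOn γ (Icc 0 1)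

/-- A periodic geodesic: a closed curve which is locally length-minimizing. -/
def IsPeriodicGeodesic {X : Type*} [MetricSpace X] (γ : ℝ → X) : Prop :=
  IsLoop γ ∧ ∃ δ > 0, ∀ s t : ℝ, s ≤ t → t - s ≤ δ →
    eVariationOn γ (Icc s t) = edist (γ s) (γ t)

open scoped NNReal Topology

/-!
Shortest paths of length `≤ ε` are `ε`-Lipschitz, so by Arzelà–Ascoli every sequence of them
whose endpoints converge has a uniformly convergent subsequence. Distances pass to the limit,
so the limit is a shortest path between the limit endpoints, hence the unique one. A failure of
uniform continuity would produce a sequence of shortest paths staying `η` away from that limit.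
-/

open BoundedContinuousFunction in
theorem exists_subseq_tendstoUniformly_of_lipschitzWith {α β : Type*} [PseudoMetricSpace α]
    [CompactSpace α] [MetricSpace β] {f : ℕ → α → β} {K : ℝ≥0} (hf : ∀ n, LipschitzWith K (f n))
    {s : Set β} (hs : IsCompact s) (hfs : ∀ n x, f n x ∈ s) :
    ∃ g : α → β, ∃ φ : ℕ → ℕ, StrictMono φ ∧ TendstoUniformly (fun n => f (φ n)) g atTop := by
  let F : ℕ → α →ᵇ β := fun n => .mkOfCompact ⟨f n, (hf n).continuous⟩
  have hF : IsCompact (closure (range F)) := by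
    refine arzela_ascoli s hs _ ?_ ?_
    · rintro _ x ⟨n, rfl⟩
      exact hfs n x
    · exact (LipschitzWith.uniformEquicontinuous _ K fun ⟨_, n, rfl⟩ => hf n).equicontinuous
  obtain ⟨g, -, φ, hφ, hlim⟩ := hF.tendsto_subseq fun n => subset_closure (mem_range_self n)
  exact ⟨g, φ, hφ, tendsto_iff_tendstoUniformly.1 hlim⟩

namespace IsGeodSeg

variable {X : Type*} [MetricSpace X] {γ : ℝ → X} {x y : X}

theorem lipschitzWith_restrict (hγ : IsGeodSeg γ x y) :
    LipschitzWith (nndist x y) (fun t : Icc (0:ℝ) 1 => γ t) :=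
  LipschitzWith.of_dist_le_mul fun s t => by
    rw [hγ.2.2 s s.2 t t.2, Subtype.dist_eq, Real.dist_eq,
      coe_nndist, mul_comm]

theorem dist_left_le {t : ℝ} (hγ : IsGeodSeg γ x y) (ht : t ∈ Icc (0:ℝ) 1) :
    dist (γ t) x ≤ dist x y := by
  have h := hγ.2.2 t ht 0 (left_mem_Icc.2 zero_le_one)
  rw [hγ.1, sub_zero, abs_of_nonneg ht.1] at h
  rw [h]
  exact mul_le_of_le_one_left dist_nonneg ht.2

theorem of_tendsto {ι : Type*} {l : Filter ι} [l.NeBot] {γ : ι → ℝ → X} {x y : ι → X}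
    {g : ℝ → X} {a b : X} (hγ : ∀ i, IsGeodSeg (γ i) (x i) (y i)) (hx : Tendsto x l (𝓝 a))
    (hy : Tendsto y l (𝓝 b)) (hg : ∀ t ∈ Icc (0:ℝ) 1, Tendsto (fun i => γ i t) l (𝓝 (g t))) :
    IsGeodSeg g a b := by
  refine ⟨?_, ?_, fun s hs t ht => ?_⟩
  · exact tendsto_nhds_unique (hg 0 (left_mem_Icc.2 zero_le_one))
      (hx.congr fun i => (hγ i).1.symm)
  · exact tendsto_nhds_unique (hg 1 (right_mem_Icc.2 zero_le_one))
      (hy.congr fun i => (hγ i).2.1.symm)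
  · exact tendsto_nhds_unique ((hg s hs).dist (hg t ht))
      (((hx.dist hy).const_mul |s - t|).congr fun i => ((hγ i).2.2 s hs t ht).symm)

end IsGeodSeg

open Classical in
noncomputable def geodSeg {X : Type*} [MetricSpace X] (a b : X) : ℝ → X :=
  if h : ∃ γ, IsGeodSeg γ a b then h.choose else fun _ => a

namespace LocUniqGeo

variable {X : Type*} [MetricSpace X] {ε : ℝ} {a b : X}

theorem isGeodSeg_geodSeg (huniq : LocUniqGeo X ε) (hab : dist a b ≤ ε) :
    IsGeodSeg (geodSeg a b) a b := by
  have h : ∃ γ, IsGeodSeg γ a b := (huniq a b hab).imp fun _ => And.left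
  rw [geodSeg, dif_pos h]
  exact h.choose_spec

theorem eqOn_geodSeg {γ : ℝ → X} (huniq : LocUniqGeo X ε) (hab : dist a b ≤ ε)
    (hγ : IsGeodSeg γ a b) : EqOn γ (geodSeg a b) (Icc (0:ℝ) 1) := by
  obtain ⟨γ₀, -, hγ₀⟩ := huniq a b hab
  exact (hγ₀ γ hγ).trans (hγ₀ _ (huniq.isGeodSeg_geodSeg hab)).symm

theorem exists_subseq_tendstoUniformlyOn_geodSeg [ProperSpace X] (huniq : LocUniqGeo X ε)
    {u v : ℕ → X} (hu : Tendsto u atTop (𝓝 a)) (hv : Tendsto v atTop (𝓝 b))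
    (huv : ∀ n, dist (u n) (v n) ≤ ε) :
    ∃ φ : ℕ → ℕ, StrictMono φ ∧
      TendstoUniformlyOn (fun n => geodSeg (u (φ n)) (v (φ n))) (geodSeg a b) atTop
        (Icc (0:ℝ) 1) := by
  have hgeod n : IsGeodSeg (geodSeg (u n) (v n)) (u n) (v n) := huniq.isGeodSeg_geodSeg (huv n)
  obtain ⟨R, hR⟩ := (isBounded_range_of_tendsto u hu).subset_closedBall a
  have hlip n : LipschitzWith ε.toNNReal (fun t : Icc (0:ℝ) 1 => geodSeg (u n) (v n) t) :=
    (hgeod n).lipschitzWith_restrict.weaken <| by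
      rw [← NNReal.coe_le_coe, coe_nndist]
      exact (huv n).trans (Real.le_coe_toNNReal ε)
  have hball n (t : Icc (0:ℝ) 1) : geodSeg (u n) (v n) t ∈ closedBall a (ε + R) :=
    (dist_triangle _ _ _).trans <|
      add_le_add (((hgeod n).dist_left_le t.2).trans (huv n)) (hR (mem_range_self n))
  obtain ⟨g, φ, hφ, hlim⟩ :=
    exists_subseq_tendstoUniformly_of_lipschitzWith hlip (isCompact_closedBall a _) hball
  let γ : ℝ → X := IccExtend zero_le_one g
  have hγ : TendstoUniformlyOn (fun n => geodSeg (u (φ n)) (v (φ n))) γ atTop (Icc 0 1) := by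
    rwa [tendstoUniformlyOn_iff_tendstoUniformly_comp_coe, show γ ∘ Subtype.val = g from
      funext (IccExtend_val zero_le_one g)]
  have hab : dist a b ≤ ε := le_of_tendsto' (hu.dist hv) huv
  have hγ_geod : IsGeodSeg γ a b :=
    .of_tendsto (fun n => hgeod (φ n)) (hu.comp hφ.tendsto_atTop) (hv.comp hφ.tendsto_atTop)
      fun t ht => hγ.tendsto_at ht
  exact ⟨φ, hφ, hγ.congr_right (huniq.eqOn_geodSeg hab hγ_geod)⟩

theorem exists_forall_dist_geodSeg_lt [ProperSpace X] (huniq : LocUniqGeo X ε) (a b : X)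
    {η : ℝ} (hη : 0 < η) :
    ∃ δ > 0, ∀ a' b' : X, dist a' b' ≤ ε → dist a a' < δ → dist b b' < δ →
      ∀ t ∈ Icc (0:ℝ) 1, dist (geodSeg a b t) (geodSeg a' b' t) < η := by
  by_contra! hcon
  choose u v huv hu hv t ht hηt using fun n : ℕ => hcon (1 / (n + 1)) Nat.one_div_pos_of_nat
  have htendsto {w : ℕ → X} {c : X} (hw : ∀ n, dist c (w n) < 1 / (n + 1)) :
      Tendsto w atTop (𝓝 c) :=
    tendsto_iff_dist_tendsto_zero.2 <| squeeze_zero (fun _ => dist_nonneg)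
      (fun n => (dist_comm _ c ▸ hw n).le) tendsto_one_div_add_atTop_nhds_zero_nat
  obtain ⟨φ, -, hφ⟩ :=
    huniq.exists_subseq_tendstoUniformlyOn_geodSeg (htendsto hu) (htendsto hv) huv
  obtain ⟨n, hn⟩ := (Metric.tendstoUniformlyOn_iff.1 hφ η hη).exists
  exact (hn (t (φ n)) (ht _)).not_ge (hηt _)

end LocUniqGeo

theorem statement1_general {X : Type*} [MetricSpace X] [ProperSpace X] {ε : ℝ}
    (huniq : LocUniqGeo X ε) :
    ∃ G : X → X → ℝ → X,
      (∀ a b : X, dist a b < ε → IsGeodSeg (G a b) a b) ∧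
      (∀ a b : X, dist a b < ε → ∀ η > 0, ∃ δ > 0, ∀ a' b' : X,
        dist a' b' < ε → dist a a' < δ → dist b b' < δ →
        ∀ t ∈ Icc (0:ℝ) 1, dist (G a b t) (G a' b' t) < η) := by
  refine ⟨geodSeg, fun a b hab => huniq.isGeodSeg_geodSeg hab.le, fun a b _ η hη => ?_⟩
  obtain ⟨δ, hδ, hclose⟩ := huniq.exists_forall_dist_geodSeg_lt a b hη
  exact ⟨δ, hδ, fun a' b' hab' => hclose a' b' hab'.le⟩

/-- Shortest paths of length `< ε` vary continuously (in the uniform metric)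
with their endpoints. -/
theorem statement1 {X : Type*} [MetricSpace X] [ProperSpace X] {ε : ℝ} (hε : 0 < ε)
    (hgeo : GeodesicSpace X) (huniq : LocUniqGeo X ε) :
    ∃ G : X → X → ℝ → X,
      (∀ a b : X, dist a b < ε → IsGeodSeg (G a b) a b) ∧
      (∀ a b : X, dist a b < ε → ∀ η > 0, ∃ δ > 0, ∀ a' b' : X,
        dist a' b' < ε → dist a a' < δ → dist b b' < δ →
        ∀ t ∈ Icc (0:ℝ) 1, dist (G a b t) (G a' b' t) < η) :=
  statement1_general huniq
end

section
/- Let X be an ε-locally uniquely geodesic compact geodesic metric space. Then every closed curve γ : S¹ → X of length ≤ ε is null-homotopic in X. -/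
open Set Filter Metric
open scoped ENNReal

/-!
Every point of the loop lies within `ε` of `x₀ = γ 0`, since the length bounds `d(x₀, γ t)`, so
`x₀` and `γ t` are joined by a unique shortest path `c_t`, and `H (t, s) = c_t (1 - s)` contracts
the loop. For continuity: `c_t (λ)` is the only point `p` with `d(x₀, p) = λ d(x₀, γ t)` and
`d(p, γ t) = (1 - λ) d(x₀, γ t)` (concatenating shortest paths through such a `p` gives a shortest
path), this condition is closed, and a map with closed graph into a compact space is continuous.
-/

def IsFractionPoint {X : Type*} [MetricSpace X] (x y : X) (s : ℝ) (p : X) : Prop :=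
  dist x p = s * dist x y ∧ dist p y = (1 - s) * dist x y

theorem continuous_of_isClosed_relation_of_unique {Y X : Type*} [TopologicalSpace Y]
    [TopologicalSpace X] [CompactSpace X] {R : Y → X → Prop}
    (hR : IsClosed {q : Y × X | R q.1 q.2}) (f : Y → X) (hf : ∀ y, R y (f y))
    (huniq : ∀ y p, R y p → p = f y) : Continuous f := by
  rw [continuous_iff_isClosed]
  intro K hK
  have hpre : f ⁻¹' K = Prod.fst '' ({q : Y × X | R q.1 q.2} ∩ univ ×ˢ K) := by
    ext y
    constructor
    · exact fun hy => ⟨(y, f y), ⟨hf y, trivial, hy⟩, rfl⟩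
    · rintro ⟨⟨y, p⟩, ⟨hR, -, hpK⟩, rfl⟩
      rwa [huniq y p hR] at hpK
  rw [hpre]
  exact isClosedMap_fst_of_compactSpace _ (hR.inter (isClosed_univ.prod hK))

theorem edist_le_loopLength {X : Type*} [MetricSpace X] {γ : ℝ → X}
    (hper : Function.Periodic γ 1) (t : ℝ) : edist (γ 0) (γ t) ≤ loopLength γ := by
  have hfract : γ (Int.fract t) = γ t := by
    simpa only [mul_one, Int.self_sub_floor] using hper.sub_int_mul_eq (x := t) ⌊t⌋
  rw [← hfract]
  exact eVariationOn.edist_le γ ⟨le_rfl, zero_le_one⟩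
    ⟨Int.fract_nonneg t, (Int.fract_lt_one t).le⟩

section Geodesics

variable {X : Type*} [MetricSpace X] {x y p : X} {s : ℝ}

theorem isGeodSeg_of_dist_le {g : ℝ → X} (h0 : g 0 = x) (h1 : g 1 = y)
    (hle : ∀ u v, 0 ≤ u → u ≤ v → v ≤ 1 → dist (g u) (g v) ≤ (v - u) * dist x y) :
    IsGeodSeg g x y := by
  have heq : ∀ u v, 0 ≤ u → u ≤ v → v ≤ 1 → dist (g u) (g v) = (v - u) * dist x y := by
    intro u v hu huv hv
    have hxy : dist x y ≤ dist x (g u) + dist (g u) (g v) + dist (g v) y := by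
      rw [← h0, ← h1]
      exact dist_triangle4 _ _ _ _
    have hxu := h0 ▸ hle 0 u le_rfl hu (huv.trans hv)
    have hvy := h1 ▸ hle v 1 (hu.trans huv) hv le_rfl
    linarith [hle u v hu huv hv]
  refine ⟨h0, h1, fun u hu v hv => ?_⟩
  rcases le_total u v with huv | hvu
  · rw [heq u v hu.1 huv hv.2, abs_of_nonpos (sub_nonpos.2 huv), neg_sub]
  · rw [dist_comm, heq v u hv.1 hvu hu.2, abs_of_nonneg (sub_nonneg.2 hvu)]

theorem IsGeodSeg.dist_apply_div {α : ℝ → X} (hα : IsGeodSeg α x y) {c d u v : ℝ}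
    (hc : 0 ≤ c) (hxy : dist x y = c * d) (hu : u ∈ Icc 0 c) (hv : v ∈ Icc 0 c) :
    dist (α (u / c)) (α (v / c)) = |u - v| * d := by
  rcases hc.eq_or_lt with rfl | hc
  · obtain rfl : u = 0 := le_antisymm hu.2 hu.1
    obtain rfl : v = 0 := le_antisymm hv.2 hv.1
    simp
  rw [hα.2.2 _ ⟨div_nonneg hu.1 hc.le, div_le_one_of_le₀ hu.2 hc.le⟩
    _ ⟨div_nonneg hv.1 hc.le, div_le_one_of_le₀ hv.2 hc.le⟩, hxy, ← sub_div, abs_div,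
    abs_of_pos hc]
  field_simp

theorem IsGeodSeg.isFractionPoint_apply {g : ℝ → X} (hg : IsGeodSeg g x y) (hs : s ∈ Icc 0 1) :
    IsFractionPoint x y s (g s) := by
  obtain ⟨hg0, hg1, hg⟩ := hg
  constructor
  · rw [← hg0, hg 0 ⟨le_rfl, zero_le_one⟩ s hs, hg0, zero_sub, abs_neg, abs_of_nonneg hs.1]
  · rw [← hg1, hg s hs 1 ⟨zero_le_one, le_rfl⟩, hg1, abs_of_nonpos (by linarith [hs.2]), neg_sub]

theorem IsFractionPoint.eq_left (hp : IsFractionPoint x y s p) (hs : s = 0) : p = x :=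
  (dist_eq_zero.1 (by simpa [hs] using hp.1)).symm

theorem IsFractionPoint.eq_right (hp : IsFractionPoint x y s p) (hs : s = 1) : p = y :=
  dist_eq_zero.1 (by simpa [hs] using hp.2)

theorem IsFractionPoint.dist_left_le (hp : IsFractionPoint x y s p) (hs : s ∈ Icc 0 1) :
    dist x p ≤ dist x y := by
  rw [hp.1]
  exact mul_le_of_le_one_left dist_nonneg hs.2

theorem IsFractionPoint.dist_right_le (hp : IsFractionPoint x y s p) (hs : s ∈ Icc 0 1) :
    dist p y ≤ dist x y := by
  rw [hp.2]
  exact mul_le_of_le_one_left dist_nonneg (by linarith [hs.1])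

theorem IsFractionPoint.exists_isGeodSeg_apply_eq (hp : IsFractionPoint x y s p)
    (hs : s ∈ Icc 0 1) {α β : ℝ → X} (hα : IsGeodSeg α x p) (hβ : IsGeodSeg β p y) :
    ∃ g : ℝ → X, IsGeodSeg g x y ∧ g s = p := by
  set d := dist x y
  let g : ℝ → X := fun u => if u ≤ s then α (u / s) else β ((u - s) / (1 - s))
  have hgs : g s = p := by
    rcases hs.1.eq_or_lt with rfl | hs0
    · simpa [g, hα.1] using (hp.eq_left rfl).symm
    · simpa [g, hs0.ne'] using hα.2.1
  have hfirst : ∀ u v, 0 ≤ u → u ≤ v → v ≤ s → dist (g u) (g v) ≤ (v - u) * d := by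
    intro u v hu huv hv
    simp only [g, if_pos (huv.trans hv), if_pos hv]
    rw [hα.dist_apply_div hs.1 hp.1 ⟨hu, huv.trans hv⟩ ⟨hu.trans huv, hv⟩, abs_sub_comm,
      abs_of_nonneg (sub_nonneg.2 huv)]
  have hg_of_le : ∀ u, s ≤ u → g u = β ((u - s) / (1 - s)) := by
    intro u hu
    rcases hu.eq_or_lt with rfl | hu
    · rw [hgs, sub_self, zero_div, hβ.1]
    · exact if_neg (not_le.2 hu)
  have hsecond : ∀ u v, s ≤ u → u ≤ v → v ≤ 1 → dist (g u) (g v) ≤ (v - u) * d := by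
    intro u v hu huv hv
    rw [hg_of_le u hu, hg_of_le v (hu.trans huv), hβ.dist_apply_div (by linarith [hs.2]) hp.2
      ⟨by linarith, by linarith⟩ ⟨by linarith, by linarith⟩, abs_sub_comm,
      abs_of_nonneg (by linarith), sub_sub_sub_cancel_right]
  refine ⟨g, isGeodSeg_of_dist_le ?_ ?_ fun u v hu huv hv => ?_, hgs⟩
  · simpa [g, hs.1] using hα.1
  · rw [hg_of_le 1 hs.2]
    rcases hs.2.eq_or_lt with rfl | hs1
    · simpa [hβ.1] using hp.eq_right rfl
    · simpa [(sub_pos.2 hs1).ne'] using hβ.2.1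
  rcases le_total v s with hvs | hsv
  · exact hfirst u v hu huv hvs
  rcases le_total s u with hsu | hus
  · exact hsecond u v hsu huv hv
  calc dist (g u) (g v) ≤ dist (g u) (g s) + dist (g s) (g v) := dist_triangle _ _ _
    _ ≤ (s - u) * d + (v - s) * d :=
      add_le_add (hfirst u s hu hus le_rfl) (hsecond s v le_rfl hsv hv)
    _ = (v - u) * d := by ring

end Geodesics

section LocUniqGeo

variable {X : Type*} [MetricSpace X] {ε : ℝ}

theorem LocUniqGeo.eq_of_isFractionPoint (h : LocUniqGeo X ε) {x y p p' : X} {s : ℝ}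
    (hxy : dist x y ≤ ε) (hs : s ∈ Icc 0 1) (hp : IsFractionPoint x y s p)
    (hp' : IsFractionPoint x y s p') : p = p' := by
  have hgeod : ∀ {q}, IsFractionPoint x y s q → ∃ g, IsGeodSeg g x y ∧ g s = q := by
    intro q hq
    obtain ⟨α, hα, -⟩ := h x q ((hq.dist_left_le hs).trans hxy)
    obtain ⟨β, hβ, -⟩ := h q y ((hq.dist_right_le hs).trans hxy)
    exact hq.exists_isGeodSeg_apply_eq hs hα hβ
  obtain ⟨g, hg, rfl⟩ := hgeod hp
  obtain ⟨g', hg', rfl⟩ := hgeod hp'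
  obtain ⟨c, -, hc⟩ := h x y hxy
  rw [hc g hg hs, hc g' hg' hs]

theorem LocUniqGeo.exists_continuous_isFractionPoint [CompactSpace X] (h : LocUniqGeo X ε)
    (x₀ : X) : ∃ F : {q : X × ℝ // dist x₀ q.1 ≤ ε ∧ q.2 ∈ Icc 0 1} → X,
      Continuous F ∧ ∀ q, IsFractionPoint x₀ q.1.1 q.1.2 (F q) := by
  have hex : ∀ q : {q : X × ℝ // dist x₀ q.1 ≤ ε ∧ q.2 ∈ Icc 0 1},
      ∃ p, IsFractionPoint x₀ q.1.1 q.1.2 p := by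
    rintro ⟨⟨y, s⟩, hy, hs⟩
    obtain ⟨c, hc, -⟩ := h x₀ y hy
    exact ⟨c s, hc.isFractionPoint_apply hs⟩
  choose F hF using hex
  refine ⟨F, continuous_of_isClosed_relation_of_unique ?_ F hF
    fun q p hp => h.eq_of_isFractionPoint q.2.1 q.2.2 hp (hF q), hF⟩
  exact (isClosed_eq (by fun_prop) (by fun_prop)).inter (isClosed_eq (by fun_prop) (by fun_prop))

end LocUniqGeo

theorem statement2_general {X : Type*} [MetricSpace X] [CompactSpace X] {ε : ℝ} (hε : 0 < ε)
    (huniq : LocUniqGeo X ε)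
    (γ : ℝ → X) (hloop : IsLoop γ) (hlen : loopLength γ ≤ ENNReal.ofReal ε) :
    NullHomotopicLoop γ := by
  obtain ⟨hcont, hper⟩ := hloop
  have hdist : ∀ t, dist (γ 0) (γ t) ≤ ε := fun t =>
    (edist_le_ofReal hε.le).1 ((edist_le_loopLength hper t).trans hlen)
  obtain ⟨F, hFcont, hF⟩ := huniq.exists_continuous_isFractionPoint (γ 0)
  let σ : ℝ → ℝ := fun s => projIcc 0 1 zero_le_one (1 - s)
  let H : ℝ × ℝ → X := fun ts => F ⟨(γ ts.1, σ ts.2), hdist ts.1, Subtype.mem _⟩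
  refine ⟨H, ?_, fun t => ?_, ⟨γ 0, fun t => ?_⟩, fun t s => ?_⟩
  · fun_prop
  · exact (hF _).eq_right (by simp [σ])
  · exact (hF _).eq_left (by simp [σ])
  · exact congrArg F (Subtype.ext (by simp [hper t]))

/-- In a compact geodesic `ε`-locally uniquely geodesic space, every closed curve
of length `≤ ε` is null-homotopic. -/
theorem statement2 {X : Type*} [MetricSpace X] [CompactSpace X] {ε : ℝ} (hε : 0 < ε)
    (hgeo : GeodesicSpace X) (huniq : LocUniqGeo X ε)
    (γ : ℝ → X) (hloop : IsLoop γ) (hlen : loopLength γ ≤ ENNReal.ofReal ε) :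
    NullHomotopicLoop γ :=
  statement2_general hε huniq γ hloop hlen
end

section
/- Let X be an ε-locally uniquely geodesic geodesic metric space and let γ : [0,1] → X be a closed curve (γ(0) = γ(1)). Suppose k ∈ ℕ is such that each set γ([t, t + 1/k]) (indices mod 1) has diameter < ε/2. Then the Birkhoff shortening D(γ) — obtained by first replacing γ on each interval [2i/(2k), (2i+2)/(2k)] by the unique shortest path between its endpoints parametrized with constant speed, and then replacing the result on each interval [(2i+1)/(2k), (2i+3)/(2k)] (mod 1) by the unique shortest path — is a closed curve that is Lipschitz with constant kε/2. -/
/-!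
Both stages of the Birkhoff shortening are geodesic interpolations of a `1`-periodic curve on
a grid of mesh `1/k`: on every grid interval the new curve is the constant-speed shortest path
between two points of the old curve. If the old curve moves by at most `ε/2` over every step
`1/k`, each of these paths has speed at most `kε/2`, and speed bounds on adjacent intervals glue,
by the triangle inequality, into a global Lipschitz bound. For `γ₁` the step bound is the
diameter hypothesis; `γ₁` is then `(kε/2)`-Lipschitz, which is the step bound needed for `γ₂`.
-/

open Set Filter Metric
open scoped ENNReal

open scoped NNReal

section

variable {X : Type*} [MetricSpace X]

lemma IsGeodSegOn.lipschitzOnWith {f : ℝ → X} {a b : ℝ} {K : ℝ≥0} (hf : IsGeodSegOn f a b)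
    (hab : a < b) (hend : dist (f a) (f b) ≤ K * (b - a)) : LipschitzOnWith K f (Icc a b) := by
  refine LipschitzOnWith.of_dist_le_mul fun s hs t ht => ?_
  rw [Real.dist_eq]
  refine le_of_mul_le_mul_left ?_ (sub_pos.2 hab)
  calc (b - a) * dist (f s) (f t) = |s - t| * dist (f a) (f b) := hf s hs t ht
    _ ≤ |s - t| * (K * (b - a)) := by gcongr
    _ = (b - a) * (K * |s - t|) := by ring

lemma isGeodSegOn_comp_add_const {f : ℝ → X} {a b p : ℝ} :
    IsGeodSegOn (fun x => f (x + p)) a b ↔ IsGeodSegOn f (a + p) (b + p) := by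
  simp only [IsGeodSegOn, ← image_add_const_Icc, forall_mem_image, add_sub_add_right_eq_sub]

lemma LipschitzOnWith.Icc_union_Icc {f : ℝ → X} {K : ℝ≥0} {a b c : ℝ}
    (h₁ : LipschitzOnWith K f (Icc a b)) (h₂ : LipschitzOnWith K f (Icc b c)) :
    LipschitzOnWith K f (Icc a c) := by
  refine LipschitzOnWith.of_dist_le_mul fun s hs t ht => ?_
  wlog hst : s ≤ t generalizing s t
  · rw [dist_comm, dist_comm s]; exact this t ht s hs (le_of_not_ge hst)
  rcases le_total t b with htb | hbt
  · exact h₁.dist_le_mul s ⟨hs.1, htb.trans' hst⟩ t ⟨hs.1.trans hst, htb⟩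
  rcases le_total b s with hbs | hsb
  · exact h₂.dist_le_mul s ⟨hbs, hst.trans ht.2⟩ t ⟨hbt, ht.2⟩
  calc dist (f s) (f t) ≤ dist (f s) (f b) + dist (f b) (f t) := dist_triangle _ _ _
    _ ≤ K * dist s b + K * dist b t := add_le_add
        (h₁.dist_le_mul s ⟨hs.1, hsb⟩ b ⟨hs.1.trans hsb, le_rfl⟩)
        (h₂.dist_le_mul b ⟨le_rfl, hbt.trans ht.2⟩ t ⟨hbt, ht.2⟩)
    _ = K * dist s t := by
      simp only [Real.dist_eq, abs_of_nonpos (sub_nonpos.2 hsb), abs_of_nonpos (sub_nonpos.2 hbt),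
        abs_of_nonpos (sub_nonpos.2 hst)]
      ring

lemma lipschitzWith_of_lipschitzOnWith_Icc {f : ℝ → X} {K : ℝ≥0} {a h : ℝ} (hh : 0 < h)
    (hf : ∀ n : ℤ, LipschitzOnWith K f (Icc (a + n * h) (a + n * h + h))) : LipschitzWith K f := by
  have hN : ∀ (N : ℕ) (m : ℤ), LipschitzOnWith K f (Icc (a + m * h) (a + m * h + N * h)) := by
    intro N m
    induction N with
    | zero => exact (hf m).mono (Icc_subset_Icc_right (by simp [hh.le]))
    | succ N ih =>
      refine ih.Icc_union_Icc ?_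
      convert hf (m + N) using 2 <;> push_cast <;> ring
  refine LipschitzWith.of_dist_le_mul fun s t => ?_
  obtain ⟨N, hN'⟩ := exists_nat_ge ((|s - a| + |t - a|) / h)
  rw [div_le_iff₀ hh] at hN'
  have hs := abs_le.mp (le_of_add_le_of_nonneg_left hN' (abs_nonneg (t - a)))
  have ht := abs_le.mp (le_of_add_le_of_nonneg_right hN' (abs_nonneg (s - a)))
  refine (hN (2 * N) (-N)).dist_le_mul s ⟨?_, ?_⟩ t ⟨?_, ?_⟩ <;> push_cast <;> linarith

lemma Function.Periodic.forall_int_div_of_forall_fin {Q : ℝ → Prop} (hQ : Function.Periodic Q 1)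
    {k : ℕ} (hk : 0 < k) (h : ∀ i : Fin k, Q (i / k)) (n : ℤ) : Q (n / k) := by
  have hr₀ : 0 ≤ n % k := Int.emod_nonneg n (by omega)
  have hrk : n % k < k := Int.emod_lt_of_pos n (by omega)
  have hn : (n : ℝ) = ((n % k).toNat : ℕ) + (n / k : ℤ) * k := by
    rw [← Int.cast_natCast, Int.toNat_of_nonneg hr₀]
    exact_mod_cast (Int.emod_add_ediv_mul n k).symm
  rw [hn, add_div, mul_div_cancel_right₀ _ (by positivity), ← mul_one ((n / k : ℤ) : ℝ),
    hQ.int_mul]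
  exact h ⟨(n % k).toNat, by omega⟩

lemma lipschitzWith_of_geodesic_interpolation {f g : ℝ → X} {K : ℝ≥0} {a h : ℝ} (hh : 0 < h)
    (hpt : ∀ n : ℤ, g (a + n * h) = f (a + n * h))
    (hseg : ∀ n : ℤ, IsGeodSegOn g (a + n * h) (a + n * h + h))
    (hf : ∀ x, dist (f x) (f (x + h)) ≤ K * h) : LipschitzWith K g := by
  refine lipschitzWith_of_lipschitzOnWith_Icc hh fun n => (hseg n).lipschitzOnWith (by linarith) ?_
  have hnext := hpt (n + 1)
  rw [Int.cast_add, Int.cast_one, add_one_mul, ← add_assoc] at hnext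
  rw [hpt n, hnext, add_sub_cancel_left]
  exact hf _

lemma lipschitzWith_of_periodic_geodesic_interpolation {k : ℕ} (hk : 0 < k) {f g : ℝ → X}
    {K : ℝ≥0} {a : ℝ} (hg : Function.Periodic g 1) (hf : Function.Periodic f 1)
    (hpt : ∀ i : Fin k, g (a + i / k) = f (a + i / k))
    (hseg : ∀ i : Fin k, IsGeodSegOn g (a + i / k) (a + i / k + 1 / k))
    (hstep : ∀ x, dist (f x) (f (x + 1 / k)) ≤ K * (1 / k)) : LipschitzWith K g := by
  refine lipschitzWith_of_geodesic_interpolation (a := a) (by positivity) (fun n => ?_)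
    (fun n => ?_) hstep
  · rw [mul_one_div]
    refine Function.Periodic.forall_int_div_of_forall_fin (Q := fun x => g (a + x) = f (a + x))
      (fun x => ?_) hk hpt n
    simp only [← add_assoc, hg _, hf _]
  · rw [mul_one_div]
    refine Function.Periodic.forall_int_div_of_forall_fin
      (Q := fun x => IsGeodSegOn g (a + x) (a + x + 1 / k)) (fun x => ?_) hk hseg n
    simp only [← add_assoc, add_right_comm _ 1 (1 / (k : ℝ)), ← isGeodSegOn_comp_add_const, hg _]

end

theorem statement6_general
    {X : Type*} [MetricSpace X] {ε : ℝ} (hε : 0 < ε)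
    (k : ℕ) (hk : 0 < k) (γ γ₁ γ₂ : ℝ → X)
    (hloop : IsLoop γ) (hper1 : ∀ t, γ₁ (t + 1) = γ₁ t) (hper2 : ∀ t, γ₂ (t + 1) = γ₂ t)
    (hdiam : ∀ t s s' : ℝ, s ∈ Icc t (t + 1/(k:ℝ)) → s' ∈ Icc t (t + 1/(k:ℝ)) →
      dist (γ s) (γ s') < ε/2)
    (h1a : ∀ i : Fin k, γ₁ ((2*(i:ℝ))/(2*k)) = γ ((2*(i:ℝ))/(2*k)))
    (h1b : ∀ i : Fin k, IsGeodSegOn γ₁ ((2*(i:ℝ))/(2*k)) ((2*(i:ℝ)+2)/(2*k)))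
    (h2a : ∀ i : Fin k, γ₂ ((2*(i:ℝ)+1)/(2*k)) = γ₁ ((2*(i:ℝ)+1)/(2*k)))
    (h2b : ∀ i : Fin k, IsGeodSegOn γ₂ ((2*(i:ℝ)+1)/(2*k)) ((2*(i:ℝ)+3)/(2*k))) :
    (∀ t, γ₂ (t + 1) = γ₂ t) ∧
    ∀ s t : ℝ, dist (γ₂ s) (γ₂ t) ≤ ((k:ℝ) * ε / 2) * |s - t| := by
  have hk₀ : (0 : ℝ) < k := Nat.cast_pos.2 hk
  let K : ℝ≥0 := ⟨k * ε / 2, by positivity⟩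
  have hK : (K : ℝ) = k * ε / 2 := rfl
  have hKk : (K : ℝ) * (1 / k) = ε / 2 := by rw [hK]; field_simp
  have hγ₁ : LipschitzWith K γ₁ := by
    refine lipschitzWith_of_periodic_geodesic_interpolation hk hper1 hloop.2 (a := 0)
      (fun i => ?_) (fun i => ?_) fun x => ?_
    · convert h1a i using 2 <;> ring
    · convert h1b i using 1 <;> ring
    · rw [hKk]
      have hx : x ≤ x + 1 / k := by linarith [one_div_pos.2 hk₀]
      exact (hdiam x x _ (left_mem_Icc.2 hx) (right_mem_Icc.2 hx)).le
  have hγ₂ : LipschitzWith K γ₂ := by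
    refine lipschitzWith_of_periodic_geodesic_interpolation hk hper2 hper1 (a := 1 / (2 * k))
      (fun i => ?_) (fun i => ?_) fun x => ?_
    · convert h2a i using 2 <;> ring
    · convert h2b i using 1 <;> ring
    · simpa [abs_of_pos hk₀] using hγ₁.dist_le_mul x (x + 1 / k)
  refine ⟨hper2, fun s t => ?_⟩
  rw [← hK, ← Real.dist_eq]
  exact hγ₂.dist_le_mul s t

/-- The Birkhoff shortening `D(γ) = γ₂` of a closed curve `γ` (each `γ([t,t+1/k])`
of diameter `< ε/2`) is a closed curve, Lipschitz with constant `kε/2`. -/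
theorem statement6
    {X : Type*} [MetricSpace X] {ε : ℝ} (hε : 0 < ε)
    (hgeo : GeodesicSpace X) (huniq : LocUniqGeo X ε)
    (k : ℕ) (hk : 0 < k) (γ γ₁ γ₂ : ℝ → X)
    (hloop : IsLoop γ) (hper1 : ∀ t, γ₁ (t + 1) = γ₁ t) (hper2 : ∀ t, γ₂ (t + 1) = γ₂ t)
    (hdiam : ∀ t s s' : ℝ, s ∈ Icc t (t + 1/(k:ℝ)) → s' ∈ Icc t (t + 1/(k:ℝ)) →
      dist (γ s) (γ s') < ε/2)
    (h1a : ∀ i : Fin k, γ₁ ((2*(i:ℝ))/(2*k)) = γ ((2*(i:ℝ))/(2*k)))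
    (h1b : ∀ i : Fin k, IsGeodSegOn γ₁ ((2*(i:ℝ))/(2*k)) ((2*(i:ℝ)+2)/(2*k)))
    (h2a : ∀ i : Fin k, γ₂ ((2*(i:ℝ)+1)/(2*k)) = γ₁ ((2*(i:ℝ)+1)/(2*k)))
    (h2b : ∀ i : Fin k, IsGeodSegOn γ₂ ((2*(i:ℝ)+1)/(2*k)) ((2*(i:ℝ)+3)/(2*k))) :
    (∀ t, γ₂ (t + 1) = γ₂ t) ∧
    ∀ s t : ℝ, dist (γ₂ s) (γ₂ t) ≤ ((k:ℝ) * ε / 2) * |s - t| :=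
  statement6_general hε k hk γ γ₁ γ₂ hloop hper1 hper2 hdiam h1a h1b h2a h2b
end
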